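/- arXiv:1307.7333 — 6 statements merged into one kernel-verified Lean document; each statement's English description precedes it below -/
import Mathlib

section
/- A Z-tensor A is semi-positive if and only if A has all positive diagonal entries and there exist two positive diagonal matrices D1 = diag(c_1,...,c_n) and D2 = diag(d_1,...,d_n) (all c_i, d_i > 0) such that D1 A D2^{m-1} is strictly diagonally dominant, i.e., |c_i a_{i i ... i} d_i^{m-1}| > Σ_{(i2,...,im) ≠ (i,...,i)} |c_i a_{i i2 ... im} d_{i2} ··· d_{im}| for every i = 1, ..., n. -/
noncomputable section

/-- The tensor-vector product `(A x^{m-1})_i` for an `m`-order, `n`-dimensional real tensor,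
represented as `A : Fin n → (Fin (m-1) → Fin n) → ℝ` (first index, then the remaining indices). -/
def tmul {n k : ℕ} (A : Fin n → (Fin k → Fin n) → ℝ) (x : Fin n → ℝ) (i : Fin n) : ℝ :=
  ∑ js : Fin k → Fin n, A i js * ∏ j, x (js j)

/-- A tensor is semi-positive if there is an entrywise positive `x` with `A x^{m-1} > 0`. -/
def SemiPositive {n k : ℕ} (A : Fin n → (Fin k → Fin n) → ℝ) : Prop :=
  ∃ x : Fin n → ℝ, (∀ i, 0 < x i) ∧ ∀ i, 0 < tmul A x i

/-- The complex tensor-vector product. -/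
def ctprod {n k : ℕ} (A : Fin n → (Fin k → Fin n) → ℝ) (x : Fin n → ℂ) (i : Fin n) : ℂ :=
  ∑ js : Fin k → Fin n, (A i js : ℂ) * ∏ j, x (js j)

/-- `lam` is an eigenvalue of `A` if `A x^{m-1} = lam x^{[m-1]}` for some nonzero complex `x`. -/
def IsEigenvalue {n k : ℕ} (A : Fin n → (Fin k → Fin n) → ℝ) (lam : ℂ) : Prop :=
  ∃ x : Fin n → ℂ, x ≠ 0 ∧ ∀ i, ctprod A x i = lam * x i ^ k

/-- The spectral radius: the maximum modulus of the eigenvalues. -/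
def specRad {n k : ℕ} (A : Fin n → (Fin k → Fin n) → ℝ) : ℝ :=
  sSup ((fun lam => ‖lam‖) '' {lam | IsEigenvalue A lam})

/-- The unit tensor: diagonal entries 1, off-diagonal entries 0. -/
def unitT (n k : ℕ) : Fin n → (Fin k → Fin n) → ℝ :=
  fun i js => if js = (fun _ => i) then 1 else 0

/-- A Z-tensor: all off-diagonal entries are nonpositive. -/
def ZTensor {n k : ℕ} (A : Fin n → (Fin k → Fin n) → ℝ) : Prop :=
  ∀ i js, js ≠ (fun _ => i) → A i js ≤ 0

/-- A monotone tensor: `A x^{m-1} ≥ 0` implies `x ≥ 0`. -/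
def MonotoneT {n k : ℕ} (A : Fin n → (Fin k → Fin n) → ℝ) : Prop :=
  ∀ x : Fin n → ℝ, (∀ i, 0 ≤ tmul A x i) → ∀ i, 0 ≤ x i



lemma tmul_split {n k : ℕ} (A : Fin n → (Fin k → Fin n) → ℝ) (x : Fin n → ℝ) (i : Fin n) :
    tmul A x i = A i (fun _ => i) * x i ^ k +
      ∑ js ∈ Finset.univ.filter (fun js : Fin k → Fin n => js ≠ (fun _ => i)),
        A i js * ∏ j, x (js j) := by
  rw [tmul, ← Finset.sum_filter_add_sum_filter_not Finset.univ
    (fun js : Fin k → Fin n => js = (fun _ => i))]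
  congr 1
  rw [Finset.filter_eq', if_pos (Finset.mem_univ _), Finset.sum_singleton,
    Finset.prod_const, Finset.card_univ, Fintype.card_fin]

/-- A Z-tensor is semi-positive iff it has positive diagonal entries and
there are positive diagonal matrices `D1 = diag c`, `D2 = diag d` making `D1 A D2^{m-1}`
strictly diagonally dominant. -/
theorem stmt4 {n m : ℕ} (hm : 2 ≤ m) (A : Fin n → (Fin (m-1) → Fin n) → ℝ)
    (hZ : ZTensor A) :
    SemiPositive A ↔
      ((∀ i, 0 < A i (fun _ => i)) ∧
        ∃ c d : Fin n → ℝ, (∀ i, 0 < c i) ∧ (∀ i, 0 < d i) ∧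
          ∀ i, |c i * A i (fun _ => i) * d i ^ (m-1)| >
            ∑ js ∈ Finset.univ.filter (fun js : Fin (m-1) → Fin n => js ≠ (fun _ => i)),
              |c i * A i js * ∏ j, d (js j)|) := by
  constructor
  · rintro ⟨x, hx, htx⟩
    have hdiag : ∀ i, 0 < A i (fun _ => i) := by
      intro i
      have h := htx i
      rw [tmul_split] at h
      have hsum : ∑ js ∈ Finset.univ.filter
          (fun js : Fin (m-1) → Fin n => js ≠ (fun _ => i)),
          A i js * ∏ j, x (js j) ≤ 0 := by
        apply Finset.sum_nonpos
        intro js hjs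
        simp only [Finset.mem_filter] at hjs
        exact mul_nonpos_of_nonpos_of_nonneg (hZ i js hjs.2)
          (Finset.prod_nonneg fun j _ => (hx _).le)
      have hpow : 0 < x i ^ (m-1) := pow_pos (hx i) _
      nlinarith
    refine ⟨hdiag, fun _ => 1, x, fun _ => one_pos, hx, fun i => ?_⟩
    have h := htx i
    rw [tmul_split] at h
    have hpow : 0 < x i ^ (m-1) := pow_pos (hx i) _
    have habs : |(1:ℝ) * A i (fun _ => i) * x i ^ (m-1)|
        = A i (fun _ => i) * x i ^ (m-1) := by
      rw [one_mul, abs_of_pos (mul_pos (hdiag i) hpow)]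
    rw [habs]
    have hsumeq : ∑ js ∈ Finset.univ.filter
        (fun js : Fin (m-1) → Fin n => js ≠ (fun _ => i)),
        |(1:ℝ) * A i js * ∏ j, x (js j)|
        = -∑ js ∈ Finset.univ.filter
        (fun js : Fin (m-1) → Fin n => js ≠ (fun _ => i)),
        A i js * ∏ j, x (js j) := by
      rw [← Finset.sum_neg_distrib]
      apply Finset.sum_congr rfl
      intro js hjs
      simp only [Finset.mem_filter] at hjs
      rw [one_mul, abs_of_nonpos (mul_nonpos_of_nonpos_of_nonneg (hZ i js hjs.2)
        (Finset.prod_nonneg fun j _ => (hx _).le))]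
    rw [hsumeq]
    linarith
  · rintro ⟨hdiag, c, d, hc, hd, hdom⟩
    refine ⟨d, hd, fun i => ?_⟩
    have h := hdom i
    have hpow : 0 < d i ^ (m-1) := pow_pos (hd i) _
    have habs : |c i * A i (fun _ => i) * d i ^ (m-1)|
        = c i * (A i (fun _ => i) * d i ^ (m-1)) := by
      rw [abs_of_pos (mul_pos (mul_pos (hc i) (hdiag i)) hpow)]; ring
    rw [habs] at h
    have hsumeq : ∑ js ∈ Finset.univ.filter
        (fun js : Fin (m-1) → Fin n => js ≠ (fun _ => i)),
        |c i * A i js * ∏ j, d (js j)|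
        = c i * -∑ js ∈ Finset.univ.filter
        (fun js : Fin (m-1) → Fin n => js ≠ (fun _ => i)),
        A i js * ∏ j, d (js j) := by
      rw [← Finset.sum_neg_distrib, Finset.mul_sum]
      apply Finset.sum_congr rfl
      intro js hjs
      simp only [Finset.mem_filter] at hjs
      have : c i * A i js * ∏ j, d (js j) ≤ 0 := by
        have h1 : A i js * ∏ j, d (js j) ≤ 0 :=
          mul_nonpos_of_nonpos_of_nonneg (hZ i js hjs.2)
            (Finset.prod_nonneg fun j _ => (hd _).le)
        have := mul_nonpos_of_nonneg_of_nonpos (hc i).le h1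
        linarith [this]
      rw [abs_of_nonpos this]; ring
    rw [hsumeq] at h
    rw [tmul_split]
    have hci := hc i
    nlinarith
end
end

section
/- A Z-tensor A is semi-positive if and only if there exist a diagonal tensor D with all positive diagonal entries and an entrywise nonnegative tensor E such that A = D − E and there exists x > 0 entrywise with (D^{-1} E) x^{m-1} < x^{[m-1]} entrywise. -/
noncomputable section

lemma tmul_diag {n k : ℕ} (d : Fin n → ℝ) (x : Fin n → ℝ) (i : Fin n) :
    tmul (fun i' (js : Fin k → Fin n) => if js = (fun _ => i') then d i' else 0) x i
      = d i * x i ^ k := by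
  simp [tmul, ite_mul, Finset.prod_const]

lemma tmul_sub {n k : ℕ} (A B : Fin n → (Fin k → Fin n) → ℝ) (x : Fin n → ℝ) (i : Fin n) :
    tmul (fun i' js => A i' js - B i' js) x i = tmul A x i - tmul B x i := by
  simp [tmul, sub_mul, Finset.sum_sub_distrib]

lemma tmul_smul {n k : ℕ} (c : Fin n → ℝ) (A : Fin n → (Fin k → Fin n) → ℝ)
    (x : Fin n → ℝ) (i : Fin n) :
    tmul (fun i' js => c i' * A i' js) x i = c i * tmul A x i := by
  simp [tmul, Finset.mul_sum, mul_assoc]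

/-- A Z-tensor is semi-positive iff `A = D - E` with `D` a positive diagonal
tensor, `E ≥ 0`, and there exists `x > 0` with `(D⁻¹ E) x^{m-1} < x^{[m-1]}`. -/
theorem stmt6 {n m : ℕ} (hm : 2 ≤ m) (A : Fin n → (Fin (m-1) → Fin n) → ℝ)
    (hZ : ZTensor A) :
    SemiPositive A ↔
      ∃ (d : Fin n → ℝ) (E : Fin n → (Fin (m-1) → Fin n) → ℝ),
        (∀ i, 0 < d i) ∧ (∀ i js, 0 ≤ E i js) ∧
        (∀ i js, A i js = (if js = (fun _ => i) then d i else 0) - E i js) ∧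
        ∃ x : Fin n → ℝ, (∀ i, 0 < x i) ∧
          ∀ i, tmul (fun i' js => (d i')⁻¹ * E i' js) x i < x i ^ (m-1) := by
  constructor
  · rintro ⟨x, hx, hAx⟩
    set d : Fin n → ℝ := fun i => A i (fun _ => i) with hd
    set E : Fin n → (Fin (m-1) → Fin n) → ℝ :=
      fun i js => (if js = (fun _ => i) then d i else 0) - A i js with hE
    have hxpow : ∀ i, 0 < x i ^ (m-1) := fun i => pow_pos (hx i) _
    have key : ∀ i, tmul A x i ≤ d i * x i ^ (m-1) := by
      intro i
      have : tmul A x i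
          ≤ tmul (fun i' (js : Fin (m-1) → Fin n) => if js = (fun _ => i') then d i' else 0) x i := by
        unfold tmul
        apply Finset.sum_le_sum
        intro js _
        by_cases h : js = (fun _ => i)
        · simp [h, hd]
        · have h1 : A i js ≤ 0 := hZ i js h
          have h2 : 0 ≤ ∏ j, x (js j) := Finset.prod_nonneg fun j _ => (hx _).le
          simp only [h, if_false, zero_mul]
          exact mul_nonpos_of_nonpos_of_nonneg h1 h2
      calc tmul A x i ≤ _ := this
        _ = d i * x i ^ (m-1) := tmul_diag d x i
    have hdpos : ∀ i, 0 < d i := by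
      intro i
      have h1 : 0 < d i * x i ^ (m-1) := lt_of_lt_of_le (hAx i) (key i)
      nlinarith [hxpow i]
    refine ⟨d, E, hdpos, ?_, ?_, x, hx, ?_⟩
    · intro i js
      by_cases h : js = (fun _ => i)
      · simp [hE, h, hd]
      · have := hZ i js h
        simp [hE, h]
        linarith
    · intro i js; simp [hE]
    · intro i
      have hEA : tmul E x i = d i * x i ^ (m-1) - tmul A x i := by
        rw [hE, tmul_sub, tmul_diag]
      rw [tmul_smul, hEA]
      have hdi := hdpos i
      have hAi := hAx i
      rw [mul_sub, inv_mul_cancel_left₀ hdi.ne']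
      have : 0 < (d i)⁻¹ * tmul A x i := mul_pos (inv_pos.mpr hdi) hAi
      linarith
  · rintro ⟨d, E, hdpos, hEnn, heq, x, hx, hlt⟩
    refine ⟨x, hx, fun i => ?_⟩
    have hA : tmul A x i = d i * x i ^ (m-1) - tmul E x i := by
      have : tmul A x i
          = tmul (fun i' js => (if js = (fun _ => i') then d i' else 0) - E i' js) x i := by
        unfold tmul
        exact Finset.sum_congr rfl fun js _ => by rw [heq i js]
      rw [this, tmul_sub, tmul_diag]
    have h1 := hlt i
    rw [tmul_smul] at h1
    have hdi := hdpos i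
    have h2 : tmul E x i < d i * x i ^ (m-1) := by
      have := mul_lt_mul_of_pos_left h1 hdi
      rwa [mul_inv_cancel_left₀ hdi.ne'] at this
    rw [hA]
    linarith
end
end

section
/- There exists an M-tensor that is not semi-nonnegative: the 4-order 2-dimensional real tensor A with entries a_{1122} = −1, a_{2222} = 1, and all other entries 0 is an M-tensor (A = 2I − B where B has entries b_{1111} = 2, b_{1122} = b_{2222} = 1, all others 0, and ρ(B) = 2), but there is no x > 0 entrywise with A x^3 ≥ 0 entrywise: indeed (A x^3)_1 = −x_1 x_2^2 < 0 for every x > 0. -/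
noncomputable section

/-- The 4-order 2-dimensional tensor `A` with `a_{1122} = -1`, `a_{2222} = 1` and all
other entries `0`. -/
def Aex : Fin 2 → (Fin 3 → Fin 2) → ℝ :=
  fun i js =>
    if i = 0 ∧ js = ![0, 1, 1] then -1
    else if i = 1 ∧ js = ![1, 1, 1] then 1
    else 0

/-- The nonnegative tensor `B` with `b_{1111} = 2`, `b_{1122} = b_{2222} = 1` and all
other entries `0`. -/
def Bex : Fin 2 → (Fin 3 → Fin 2) → ℝ :=
  fun i js =>
    if i = 0 ∧ js = ![0, 0, 0] then 2
    else if i = 0 ∧ js = ![0, 1, 1] then 1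
    else if i = 1 ∧ js = ![1, 1, 1] then 1
    else 0

lemma sum_pi32 {M : Type*} [AddCommMonoid M] (f : (Fin 3 → Fin 2) → M) :
    ∑ js, f js = f ![0,0,0] + f ![1,0,0] + f ![0,1,0] + f ![1,1,0] +
      f ![0,0,1] + f ![1,0,1] + f ![0,1,1] + f ![1,1,1] := by
  rw [← (finFunctionFinEquiv (m := 2) (n := 3)).symm.sum_comp f]
  show ∑ i : Fin 8, _ = _
  rw [Fin.sum_univ_eight,
    show (finFunctionFinEquiv (m := 2) (n := 3)).symm 0 = ![0,0,0] from by decide,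
    show (finFunctionFinEquiv (m := 2) (n := 3)).symm 1 = ![1,0,0] from by decide,
    show (finFunctionFinEquiv (m := 2) (n := 3)).symm 2 = ![0,1,0] from by decide,
    show (finFunctionFinEquiv (m := 2) (n := 3)).symm 3 = ![1,1,0] from by decide,
    show (finFunctionFinEquiv (m := 2) (n := 3)).symm 4 = ![0,0,1] from by decide,
    show (finFunctionFinEquiv (m := 2) (n := 3)).symm 5 = ![1,0,1] from by decide,
    show (finFunctionFinEquiv (m := 2) (n := 3)).symm 6 = ![0,1,1] from by decide,
    show (finFunctionFinEquiv (m := 2) (n := 3)).symm 7 = ![1,1,1] from by decide]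

lemma tmulA0 (x : Fin 2 → ℝ) : tmul Aex x 0 = -(x 0 * x 1 ^ 2) := by
  rw [tmul, sum_pi32]
  simp (config := { decide := true }) [Aex, Fin.prod_univ_three]
  ring

lemma ctB0 (x : Fin 2 → ℂ) : ctprod Bex x 0 = 2 * x 0 ^ 3 + x 0 * x 1 ^ 2 := by
  rw [ctprod, sum_pi32]
  simp (config := { decide := true }) [Bex, Fin.prod_univ_three]
  ring

lemma ctB1 (x : Fin 2 → ℂ) : ctprod Bex x 1 = x 1 ^ 3 := by
  rw [ctprod, sum_pi32]
  simp (config := { decide := true }) [Bex, Fin.prod_univ_three]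
  ring

lemma eig2 : IsEigenvalue Bex 2 := by
  refine ⟨![1, 0], ?_, ?_⟩
  · intro h
    have := congrFun h 0
    simp at this
  · intro i
    fin_cases i
    · show ctprod Bex ![1, 0] 0 = 2 * (![1, 0] : Fin 2 → ℂ) 0 ^ 3
      rw [ctB0]; norm_num
    · show ctprod Bex ![1, 0] 1 = 2 * (![1, 0] : Fin 2 → ℂ) 1 ^ 3
      rw [ctB1]; norm_num

lemma eigBound (lam : ℂ) (h : IsEigenvalue Bex lam) : ‖lam‖ ≤ 2 := by
  obtain ⟨x, hx, heig⟩ := h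
  by_cases h1 : x 1 = 0
  · have h0 : x 0 ≠ 0 := by
      intro h0
      apply hx
      funext i
      fin_cases i <;> simpa
    have key := heig 0
    rw [ctB0, h1] at key
    have hl : lam = 2 := by
      have h' : (lam - 2) * x 0 ^ 3 = 0 := by
        linear_combination -key
      rcases mul_eq_zero.1 h' with h | h
      · exact sub_eq_zero.1 h
      · exact absurd h (pow_ne_zero _ h0)
    rw [hl]; norm_num
  · have key := heig 1
    rw [ctB1] at key
    have hl : lam = 1 := by
      have h' : (lam - 1) * x 1 ^ 3 = 0 := by linear_combination -key
      rcases mul_eq_zero.1 h' with h | h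
      · exact sub_eq_zero.1 h
      · exact absurd h (pow_ne_zero _ h1)
    rw [hl]; norm_num

/-- `A = 2I - B` is an M-tensor (`B ≥ 0`, `ρ(B) = 2`), but `A` is not
semi-nonnegative: `(A x^3)_1 = -x_1 x_2^2 < 0` for every `x > 0`. -/
theorem stmt11 :
    (∀ i js, 0 ≤ Bex i js) ∧ specRad Bex = 2 ∧
    (∀ i js, Aex i js = 2 * unitT 2 3 i js - Bex i js) ∧
    (∀ x : Fin 2 → ℝ, (∀ i, 0 < x i) →
      tmul Aex x 0 = -(x 0 * x 1 ^ 2) ∧ tmul Aex x 0 < 0) ∧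
    ¬ ∃ x : Fin 2 → ℝ, (∀ i, 0 < x i) ∧ ∀ i, 0 ≤ tmul Aex x i := by
  refine ⟨?_, ?_, ?_, ?_, ?_⟩
  · intro i js; unfold Bex; split_ifs <;> norm_num
  · have hb : ∀ y ∈ (fun lam => ‖lam‖) '' {lam | IsEigenvalue Bex lam}, y ≤ 2 := by
      rintro y ⟨lam, hlam, rfl⟩
      exact eigBound lam hlam
    unfold specRad
    apply le_antisymm
    · exact Real.sSup_le hb (by norm_num)
    · exact le_csSup ⟨2, hb⟩ ⟨2, eig2, by norm_num⟩
  · intro i js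
    have hi : i = 0 ∨ i = 1 := by omega
    have e0 : (fun _ => (0 : Fin 2)) = ![0,0,0] := by decide
    have e1 : (fun _ => (1 : Fin 2)) = ![1,1,1] := by decide
    rcases hi with rfl | rfl
    · by_cases h1 : js = ![0,0,0]
      · subst h1
        simp (config := { decide := true }) [Aex, Bex, unitT]
      · by_cases h2 : js = ![0,1,1]
        · subst h2
          simp (config := { decide := true }) [Aex, Bex, unitT]
        · simp [Aex, Bex, unitT, e0, h1, h2]
    · by_cases h1 : js = ![1,1,1]
      · subst h1
        simp (config := { decide := true }) [Aex, Bex, unitT]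
        norm_num
      · simp [Aex, Bex, unitT, e1, h1]
  · intro x hx
    have h2 := mul_pos (hx 0) (pow_pos (hx 1) 2)
    refine ⟨tmulA0 x, ?_⟩
    rw [tmulA0]
    linarith
  · rintro ⟨x, hx, hn⟩
    have := hn 0
    rw [tmulA0] at this
    have h2 := mul_pos (hx 0) (pow_pos (hx 1) 2)
    linarith
end
end

section
/- Every H+-eigenvalue of an even-order monotone tensor is positive: if A is an m-order n-dimensional real tensor with m even that is monotone, and λ ∈ ℝ satisfies A x^{m-1} = λ x^{[m-1]} for some nonzero x ∈ ℝ^n with x ≥ 0 entrywise, then λ > 0. -/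
noncomputable section

/-- Every H⁺-eigenvalue of an even-order monotone tensor is positive. -/
theorem stmt15 {n m : ℕ} (hm : 2 ≤ m) (hme : Even m)
    (A : Fin n → (Fin (m-1) → Fin n) → ℝ) (hmono : MonotoneT A)
    (lam : ℝ) (x : Fin n → ℝ) (hx0 : x ≠ 0) (hxnn : ∀ i, 0 ≤ x i)
    (heig : ∀ i, tmul A x i = lam * x i ^ (m-1)) :
    0 < lam := by
  by_contra hlam
  push_neg at hlam
  have hodd : Odd (m - 1) := by
    rcases hme with ⟨t, ht⟩
    have : 1 ≤ t := by omega
    exact ⟨t - 1, by omega⟩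
  have hneg : ∀ i, tmul A (-x) i = - tmul A x i := by
    intro i
    unfold tmul
    rw [← Finset.sum_neg_distrib]
    refine Finset.sum_congr rfl fun js _ => ?_
    have : (∏ j, (-x) (js j)) = - ∏ j, x (js j) := by
      simp only [Pi.neg_apply, neg_eq_neg_one_mul (x _)]
      rw [Finset.prod_mul_distrib, Finset.prod_const, Finset.card_univ, Fintype.card_fin,
        hodd.neg_one_pow]
      ring
    rw [this]; ring
  have hge : ∀ i, 0 ≤ tmul A (-x) i := by
    intro i
    rw [hneg i, heig i]
    have : 0 ≤ x i ^ (m - 1) := pow_nonneg (hxnn i) _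
    nlinarith [mul_nonpos_of_nonpos_of_nonneg hlam this]
  have hle := hmono (-x) hge
  apply hx0
  funext i
  have := hle i
  simp only [Pi.neg_apply] at this
  have := hxnn i
  simp only [Pi.zero_apply]
  linarith
end
end

section
/- An even-order monotone Z-tensor has all positive diagonal entries: if A is an m-order n-dimensional real tensor with m even, all off-diagonal entries ≤ 0, and A is monotone, then a_{i i ... i} > 0 for all i = 1, ..., n. -/
noncomputable section

/-- An even-order monotone Z-tensor has all positive diagonal entries. -/
theorem stmt17 {n m : ℕ} (hm : 2 ≤ m) (hme : Even m)
    (A : Fin n → (Fin (m-1) → Fin n) → ℝ) (hZ : ZTensor A) (hmono : MonotoneT A) :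
    ∀ i, 0 < A i (fun _ => i) := by
  intro i
  by_contra h
  push_neg at h
  have hk : Odd (m - 1) := Nat.Even.sub_odd (by omega) hme odd_one
  set x : Fin n → ℝ := fun j => if j = i then -1 else 0 with hx
  have key : ∀ j, tmul A x j = - A j (fun _ => i) := by
    intro j
    unfold tmul
    rw [Finset.sum_eq_single (fun _ => i)]
    · simp [hx, Finset.prod_const, hk.neg_one_pow]
    · intro js _ hjs
      obtain ⟨t, ht⟩ : ∃ t, js t ≠ i := by
        by_contra hc; push_neg at hc; exact hjs (funext hc)
      rw [Finset.prod_eq_zero (Finset.mem_univ t) (by simp [hx, ht])]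
      ring
    · intro hmem; exact absurd (Finset.mem_univ _) hmem
  have hpos : ∀ j, 0 ≤ tmul A x j := by
    intro j
    rw [key j]
    rcases eq_or_ne j i with rfl | hne
    · linarith
    · have hne2 : (fun _ : Fin (m-1) => i) ≠ (fun _ => j) := by
        intro hc
        exact hne (congrFun hc ⟨0, by omega⟩).symm
      have := hZ j (fun _ => i) hne2
      linarith
  have := hmono x hpos i
  simp [hx] at this
  linarith
end
end

section
/- There exists an even-order nonsingular M-tensor that is not monotone: for n ≥ 2 and s > n, let J be the 4-order n-dimensional tensor with entries j_{i1 i2 i3 i4} = δ_{i1 i2} δ_{i3 i4} (so that J x^3 = (x^T x) x), and let A = s I − J. Then ρ(J) = n, so A is a nonsingular M-tensor; yet for x = (1, ..., 1, −δ)^T with 0 < δ ≤ √((n−1)/(s−1)), one has A x^3 ≥ 0 entrywise while x is not entrywise nonnegative, so A is not monotone. -/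
noncomputable section

/-- The 4-order `n`-dimensional tensor `J` with entries `j_{i₁i₂i₃i₄} = δ_{i₁i₂} δ_{i₃i₄}`,
so that `J x^3 = (xᵀ x) x`. -/
def Jten (n : ℕ) : Fin n → (Fin 3 → Fin n) → ℝ :=
  fun i js => if js 0 = i ∧ js 2 = js 1 then 1 else 0

/-- The tensor `A = s I - J`. -/
def Aten (n : ℕ) (s : ℝ) : Fin n → (Fin 3 → Fin n) → ℝ :=
  fun i js => s * unitT n 3 i js - Jten n i js

/-- The vector `x = (1, …, 1, -δ)ᵀ`. -/
def xvec (n : ℕ) (δ : ℝ) : Fin n → ℝ :=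
  fun i => if (i : ℕ) = n - 1 then -δ else 1


open Finset in
lemma sum_J {R : Type*} [CommRing R] {n : ℕ} (i : Fin n) (x : Fin n → R) :
    ∑ js : Fin 3 → Fin n, (if js 0 = i ∧ js 2 = js 1 then (1:R) else 0) * ∏ j, x (js j)
      = x i * ∑ b, x b ^ 2 := by
  have h1 : ∀ js : Fin 3 → Fin n,
      (if js 0 = i ∧ js 2 = js 1 then (1:R) else 0) * ∏ j, x (js j)
      = if js 0 = i ∧ js 2 = js 1 then ∏ j, x (js j) else 0 := by
    intro js; split <;> simp
  simp_rw [h1]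
  rw [← Finset.sum_filter, Finset.mul_sum]
  refine Finset.sum_nbij' (fun js => js 1) (fun b => ![i, b, b]) ?_ ?_ ?_ ?_ ?_
  · intro a _; exact mem_univ _
  · intro b _; simp [Finset.mem_filter]
  · intro a ha
    simp only [Finset.mem_filter, mem_univ, true_and] at ha
    funext j
    fin_cases j <;> simp [ha.1, ha.2]
  · intro b _; simp
  · intro a ha
    simp only [Finset.mem_filter, mem_univ, true_and] at ha
    rw [Fin.prod_univ_three, ha.1, ha.2]; ring

lemma sum_unit {R : Type*} [CommRing R] {n : ℕ} (i : Fin n) (x : Fin n → R) :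
    ∑ js : Fin 3 → Fin n, (if js = (fun _ => i) then (1:R) else 0) * ∏ j, x (js j)
      = x i ^ 3 := by
  rw [Finset.sum_eq_single (fun _ => i)]
  · simp [Fin.prod_univ_three, pow_succ]
  · intro b _ hb; simp [hb]
  · intro h; simp at h

lemma tmul_A {n : ℕ} (s : ℝ) (x : Fin n → ℝ) (i : Fin n) :
    tmul (Aten n s) x i = s * x i ^ 3 - x i * ∑ b, x b ^ 2 := by
  unfold tmul Aten
  simp only [sub_mul, mul_assoc]
  rw [Finset.sum_sub_distrib, ← Finset.mul_sum]
  rw [show (∑ js : Fin 3 → Fin n, unitT n 3 i js * ∏ j, x (js j)) = x i ^ 3 from sum_unit i x,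
    show (∑ js : Fin 3 → Fin n, Jten n i js * ∏ j, x (js j)) = x i * ∑ b, x b ^2 from sum_J i x]

lemma ctprod_J {n : ℕ} (x : Fin n → ℂ) (i : Fin n) :
    ctprod (Jten n) x i = x i * ∑ b, x b ^ 2 := by
  unfold ctprod
  rw [← sum_J i x]
  congr 1; funext js
  simp [Jten, apply_ite (fun r : ℝ => (r : ℂ))]

lemma eig_bound {n : ℕ} (hn : 2 ≤ n) {lam : ℂ} (h : IsEigenvalue (Jten n) lam) :
    ‖lam‖ ≤ n := by
  obtain ⟨x, hx, hxe⟩ := h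
  have hne : (Finset.univ : Finset (Fin n)).Nonempty := ⟨⟨0, by omega⟩, Finset.mem_univ _⟩
  obtain ⟨i, -, hi⟩ := Finset.exists_max_image Finset.univ (fun j => ‖x j‖) hne
  obtain ⟨j, hj⟩ := Function.ne_iff.mp hx
  have hxi : 0 < ‖x i‖ :=
    lt_of_lt_of_le (by simpa using hj) (hi j (Finset.mem_univ _))
  have heq := hxe i
  rw [ctprod_J] at heq
  have habs : ‖x i‖ * ‖∑ b, x b ^ 2‖
      = ‖lam‖ * ‖x i‖ ^ 3 := by
    have := congrArg (fun z : ℂ => ‖z‖) heq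
    simpa [norm_mul, norm_pow] using this
  have hS : ‖∑ b, x b ^ 2‖ ≤ n * ‖x i‖ ^ 2 := by
    calc ‖∑ b, x b ^ 2‖ ≤ ∑ b, ‖x b ^ 2‖ :=
          norm_sum_le _ _
      _ ≤ ∑ _b : Fin n, ‖x i‖ ^ 2 := by
          refine Finset.sum_le_sum fun b _ => ?_
          rw [norm_pow]
          exact pow_le_pow_left₀ (norm_nonneg _) (hi b (Finset.mem_univ _)) 2
      _ = n * ‖x i‖ ^ 2 := by simp [mul_comm]
  have key : ‖lam‖ * ‖x i‖ ^ 3 ≤ n * ‖x i‖ ^ 3 := by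
    rw [← habs]
    calc ‖x i‖ * ‖∑ b, x b ^ 2‖
        ≤ ‖x i‖ * (n * ‖x i‖ ^ 2) :=
          mul_le_mul_of_nonneg_left hS (norm_nonneg _)
      _ = n * ‖x i‖ ^ 3 := by ring
  exact le_of_mul_le_mul_right key (pow_pos hxi 3)

open Finset in
lemma xvec_sumsq {n : ℕ} (hn : 2 ≤ n) (δ : ℝ) :
    ∑ b, (xvec n δ b) ^ 2 = (n - 1) + δ ^ 2 := by
  set c : Fin n := ⟨n - 1, by omega⟩ with hc
  have hval : ∀ b : Fin n, (xvec n δ b) ^ 2 = if b = c then δ ^ 2 else 1 := by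
    intro b
    unfold xvec
    by_cases hb : b = c
    · simp [hb, hc]
    · rw [if_neg, if_neg hb]
      · ring
      · intro hbv; exact hb (Fin.ext hbv)
  simp_rw [hval]
  rw [← Finset.add_sum_erase _ _ (Finset.mem_univ c), if_pos rfl]
  rw [Finset.sum_congr rfl (fun b hb => if_neg (Finset.ne_of_mem_erase hb))]
  rw [Finset.sum_const, Finset.card_erase_of_mem (Finset.mem_univ c)]
  simp only [Finset.card_univ, Fintype.card_fin, nsmul_eq_mul, mul_one]
  have h1n : 1 ≤ n := by omega
  push_cast [h1n]
  ring

/-- For `n ≥ 2` and `s > n`, `ρ(J) = n`, so `A = s I - J` is a nonsingular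
M-tensor; yet for `x = (1,…,1,-δ)ᵀ` with `0 < δ ≤ √((n-1)/(s-1))` we have `A x^3 ≥ 0`
while `x` is not nonnegative, so `A` is not monotone. -/
theorem stmt19 (n : ℕ) (hn : 2 ≤ n) (s : ℝ) (hs : (n : ℝ) < s) :
    specRad (Jten n) = n ∧
    (∀ δ : ℝ, 0 < δ → δ ≤ Real.sqrt ((n - 1) / (s - 1)) →
      (∀ i, 0 ≤ tmul (Aten n s) (xvec n δ) i) ∧ ¬ (∀ i, 0 ≤ xvec n δ i)) ∧
    ¬ MonotoneT (Aten n s) := by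
  have hn1 : (1 : ℝ) ≤ (n : ℝ) - 1 := by
    have : (2 : ℝ) ≤ n := by exact_mod_cast hn
    linarith
  have hs1 : (1 : ℝ) < s := by linarith
  -- part 2
  have part2 : ∀ δ : ℝ, 0 < δ → δ ≤ Real.sqrt ((n - 1) / (s - 1)) →
      (∀ i, 0 ≤ tmul (Aten n s) (xvec n δ) i) ∧ ¬ (∀ i, 0 ≤ xvec n δ i) := by
    intro δ hδ hδle
    have hratio : (0:ℝ) ≤ ((n:ℝ) - 1) / (s - 1) := div_nonneg (by linarith) (by linarith)
    have hδsq : δ ^ 2 ≤ ((n:ℝ) - 1) / (s - 1) := (Real.le_sqrt hδ.le hratio).mp hδle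
    have hkey : δ ^ 2 * (s - 1) ≤ (n:ℝ) - 1 := by
      rw [← le_div_iff₀ (by linarith)]; exact hδsq
    constructor
    · intro i
      rw [tmul_A, xvec_sumsq hn]
      unfold xvec
      by_cases hi : (i : ℕ) = n - 1
      · rw [if_pos hi]
        nlinarith [sq_nonneg δ, hδ.le]
      · rw [if_neg hi]
        nlinarith [sq_nonneg δ]
    · intro hall
      have := hall ⟨n - 1, by omega⟩
      unfold xvec at this
      simp at this
      linarith
  refine ⟨?_, part2, ?_⟩
  · -- spectral radius
    have heig : IsEigenvalue (Jten n) ((n : ℕ) : ℂ) := by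
      refine ⟨fun _ => 1, ?_, ?_⟩
      · intro h
        have := congrFun h ⟨0, by omega⟩
        simp at this
      · intro i
        rw [ctprod_J]
        simp
    have hgreat : IsGreatest ((fun lam => ‖lam‖) '' {lam | IsEigenvalue (Jten n) lam})
        (n : ℝ) := by
      constructor
      · exact ⟨((n : ℕ) : ℂ), heig, by simp⟩
      · rintro r ⟨lam, hl, rfl⟩
        exact eig_bound hn hl
    exact hgreat.csSup_eq
  · -- not monotone
    intro hmono
    have hpos : (0:ℝ) < ((n:ℝ) - 1) / (s - 1) := div_pos (by linarith) (by linarith)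
    have hδ0 : 0 < Real.sqrt (((n:ℝ) - 1) / (s - 1)) := Real.sqrt_pos.mpr hpos
    obtain ⟨h1, h2⟩ := part2 _ hδ0 le_rfl
    exact h2 (hmono _ h1)
end
end
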